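/- Let u, v : ℝ² → ℝ be smooth functions of (x,t₁) solving the first commuting flow u_{t₁} = Q₁ᵘ, v_{t₁} = Q₁ᵛ, and suppose there is a compact set K ⊆ ℝ such that for every t₁ the functions x ↦ u(x,t₁) and x ↦ v(x,t₁) are supported in K. Then the function t₁ ↦ ∫_ℝ (−3u(x,t₁) + v(x,t₁)/2) dx is constant; that is, ℋ₀ = ∫ H₀ dx is a conserved quantity of the first commuting flow. -/

import Mathlib

open MeasureTheory

/-- First component `Q₁ᵘ` of the first commuting flow of the KKS hierarchy. -/
noncomputable def Q1u (u v : ℝ → ℝ) (x : ℝ) : ℝ :=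
  2 * iteratedDeriv 5 u x - (5 / 9) * iteratedDeriv 5 v x
    - 20 * u x * iteratedDeriv 3 u x + (50 / 9) * u x * iteratedDeriv 3 v x
    + (40 / 9) * v x * iteratedDeriv 3 u x - (10 / 9) * v x * iteratedDeriv 3 v x
    - 50 * deriv u x * iteratedDeriv 2 u x + (125 / 9) * deriv u x * iteratedDeriv 2 v x
    + (40 / 3) * deriv v x * iteratedDeriv 2 u x - (10 / 3) * deriv v x * iteratedDeriv 2 v x
    - (40 / 3) * u x * v x * deriv u x + (20 / 9) * u x * v x * deriv v x
    + 40 * (u x) ^ 2 * deriv u x - (80 / 9) * (u x) ^ 2 * deriv v x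
    + (5 / 9) * (v x) ^ 2 * deriv u x

/-- Second component `Q₁ᵛ` of the first commuting flow of the KKS hierarchy. -/
noncomputable def Q1v (u v : ℝ → ℝ) (x : ℝ) : ℝ :=
  5 * iteratedDeriv 5 u x - (4 / 3) * iteratedDeriv 5 v x
    - 40 * u x * iteratedDeriv 3 u x + 10 * u x * iteratedDeriv 3 v x
    + (10 / 3) * v x * iteratedDeriv 3 u x - (5 / 9) * v x * iteratedDeriv 3 v x
    - 120 * deriv u x * iteratedDeriv 2 u x + 30 * deriv u x * iteratedDeriv 2 v x
    + (80 / 3) * deriv v x * iteratedDeriv 2 u x - (55 / 9) * deriv v x * iteratedDeriv 2 v x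
    + (160 / 3) * u x * v x * deriv u x - 20 * u x * v x * deriv v x
    + (40 / 3) * (u x) ^ 2 * deriv v x - (40 / 3) * (v x) ^ 2 * deriv u x
    + (35 / 9) * (v x) ^ 2 * deriv v x

namespace KKSAux

open Function Metric Set
open scoped ContDiff

lemma pderiv_contDiff {w : ℝ → ℝ → ℝ} (hw : ContDiff ℝ ∞ (Function.uncurry w)) :
    ContDiff ℝ ∞ (fun p : ℝ × ℝ => deriv (fun y => w y p.2) p.1) := by
  have heq : (fun p : ℝ × ℝ => deriv (fun y => w y p.2) p.1)
      = fun p : ℝ × ℝ => fderiv ℝ (fun y => w y p.2) p.1 1 := by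
    ext p; rw [fderiv_apply_one_eq_deriv]
  rw [heq]
  apply ContDiff.fderiv_apply (f := fun (p : ℝ × ℝ) (y : ℝ) => w y p.2)
      (g := fun p : ℝ × ℝ => p.1) (k := fun _ => (1:ℝ)) (m := ∞) (n := ∞)
  · exact hw.comp (contDiff_snd.prodMk (contDiff_snd.comp contDiff_fst))
  · exact contDiff_fst
  · exact contDiff_const
  · exact_mod_cast le_top

lemma iter_contDiff {w : ℝ → ℝ → ℝ} (hw : ContDiff ℝ ∞ (Function.uncurry w)) :
    ∀ n : ℕ, ContDiff ℝ ∞ (fun p : ℝ × ℝ => iteratedDeriv n (fun y => w y p.2) p.1)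
  | 0 => by simp only [iteratedDeriv_zero]; exact hw
  | (n+1) => by
    have ih := iter_contDiff hw n
    have := pderiv_contDiff (w := fun y t => iteratedDeriv n (fun z => w z t) y) ih
    simpa [iteratedDeriv_succ] using this

lemma hasDerivAt_iter {f : ℝ → ℝ} (hf : ContDiff ℝ ∞ f) (k : ℕ) (x : ℝ) :
    HasDerivAt (iteratedDeriv k f) (iteratedDeriv (k+1) f x) x := by
  have hdiff : Differentiable ℝ (iteratedDeriv k f) :=
    hf.differentiable_iteratedDeriv k (by exact_mod_cast (by simp : (k:ℕ∞) < ⊤))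
  rw [iteratedDeriv_succ]
  exact (hdiff x).hasDerivAt

lemma support_iter_subset {f : ℝ → ℝ} {K : Set ℝ} (hKcl : IsClosed K)
    (h : support f ⊆ K) (n : ℕ) : support (iteratedDeriv n f) ⊆ K := by
  induction n with
  | zero => simpa
  | succ n ih =>
    rw [iteratedDeriv_succ]
    exact support_deriv_subset.trans (closure_minimal ih hKcl)

lemma integral_eq_zero_of_hasDerivAt {f f' : ℝ → ℝ} (hder : ∀ x, HasDerivAt f (f' x) x)
    (hcont : Continuous f') {K : Set ℝ} (hK : IsCompact K)
    (hfK : ∀ x ∉ K, f x = 0) (hf'K : ∀ x ∉ K, f' x = 0) :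
    ∫ x : ℝ, f' x = 0 := by
  obtain ⟨r, hr⟩ := hK.isBounded.subset_closedBall 0
  set b : ℝ := |r| + 1 with hb
  have hKI : K ⊆ Set.Ioc (-b) b := by
    refine hr.trans ?_
    intro x hx
    rw [mem_closedBall, dist_zero_right] at hx
    have h1 : |x| ≤ |r| := hx.trans (le_abs_self r)
    have := abs_le.1 h1
    constructor <;> simp [hb] <;> linarith [this.1, this.2]
  have hbK : b ∉ K := fun h => by
    have h1 := hr h; rw [mem_closedBall, dist_zero_right, Real.norm_eq_abs] at h1
    linarith [le_abs_self b, le_abs_self r, hb]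
  have hbK' : -b ∉ K := fun h => by
    have h1 := hr h; rw [mem_closedBall, dist_zero_right, Real.norm_eq_abs, abs_neg] at h1
    linarith [le_abs_self b, le_abs_self r, hb]
  have h1 : ∫ x : ℝ, f' x = ∫ x in Set.Ioc (-b) b, f' x := by
    refine (setIntegral_eq_integral_of_forall_compl_eq_zero fun x hx => ?_).symm
    exact hf'K x (fun hxK => hx (hKI hxK))
  have hle : (-b) ≤ b := by have := abs_nonneg r; simp [hb]; linarith
  rw [h1, ← intervalIntegral.integral_of_le hle,
    intervalIntegral.integral_eq_sub_of_hasDerivAt (fun x _ => hder x)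
      (hcont.intervalIntegrable _ _), hfK b hbK, hfK (-b) hbK', sub_zero]

/-- Antiderivative (in `x`) of `-3 Q1u + Q1v / 2`. -/
noncomputable def Fant (f g : ℝ → ℝ) (x : ℝ) : ℝ :=
  -(7/2) * iteratedDeriv 4 f x + iteratedDeriv 4 g x
  + 40 * f x * iteratedDeriv 2 f x + 25 * (iteratedDeriv 1 f x)^2
  - (35/3) * f x * iteratedDeriv 2 g x - (35/3) * g x * iteratedDeriv 2 f x
  - 15 * iteratedDeriv 1 f x * iteratedDeriv 1 g x
  + (55/18) * g x * iteratedDeriv 2 g x + (35/18) * (iteratedDeriv 1 g x)^2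
  + (100/3) * (f x)^2 * g x - (25/3) * f x * (g x)^2 - 40 * (f x)^3 + (35/54) * (g x)^3

set_option linter.unreachableTactic false in
set_option linter.unusedTactic false in
lemma hasDerivAt_Fant {f g : ℝ → ℝ} (hf : ContDiff ℝ ∞ f) (hg : ContDiff ℝ ∞ g) (x : ℝ) :
    HasDerivAt (Fant f g) (-3 * Q1u f g x + Q1v f g x / 2) x := by
  have Hf := fun k => hasDerivAt_iter hf k x
  have Hg := fun k => hasDerivAt_iter hg k x
  have hf0 : HasDerivAt f (iteratedDeriv 1 f x) x := by simpa using Hf 0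
  have hg0 : HasDerivAt g (iteratedDeriv 1 g x) x := by simpa using Hg 0
  have H : HasDerivAt (fun y =>
      -(7/2) * iteratedDeriv 4 f y + iteratedDeriv 4 g y
      + 40 * f y * iteratedDeriv 2 f y + 25 * (iteratedDeriv 1 f y)^2
      - (35/3) * f y * iteratedDeriv 2 g y - (35/3) * g y * iteratedDeriv 2 f y
      - 15 * iteratedDeriv 1 f y * iteratedDeriv 1 g y
      + (55/18) * g y * iteratedDeriv 2 g y + (35/18) * (iteratedDeriv 1 g y)^2
      + (100/3) * (f y)^2 * g y - (25/3) * f y * (g y)^2 - 40 * (f y)^3 + (35/54) * (g y)^3)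
      ((-(7/2) * iteratedDeriv 5 f x + iteratedDeriv 5 g x
      + ((40 * iteratedDeriv 1 f x) * iteratedDeriv 2 f x + (40 * f x) * iteratedDeriv 3 f x)
      + 25 * (2 * iteratedDeriv 1 f x * iteratedDeriv 2 f x)
      - (((35:ℝ)/3 * iteratedDeriv 1 f x) * iteratedDeriv 2 g x + ((35:ℝ)/3 * f x) * iteratedDeriv 3 g x)
      - (((35:ℝ)/3 * iteratedDeriv 1 g x) * iteratedDeriv 2 f x + ((35:ℝ)/3 * g x) * iteratedDeriv 3 f x)
      - ((15 * iteratedDeriv 2 f x) * iteratedDeriv 1 g x + (15 * iteratedDeriv 1 f x) * iteratedDeriv 2 g x)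
      + (((55:ℝ)/18 * iteratedDeriv 1 g x) * iteratedDeriv 2 g x + ((55:ℝ)/18 * g x) * iteratedDeriv 3 g x)
      + (35:ℝ)/18 * (2 * iteratedDeriv 1 g x * iteratedDeriv 2 g x)
      + (((100:ℝ)/3 * (2 * f x * iteratedDeriv 1 f x)) * g x + ((100:ℝ)/3 * (f x)^2) * iteratedDeriv 1 g x)
      - (((25:ℝ)/3 * iteratedDeriv 1 f x) * (g x)^2 + ((25:ℝ)/3 * f x) * (2 * g x * iteratedDeriv 1 g x))
      - 40 * (3 * (f x)^2 * iteratedDeriv 1 f x)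
      + (35:ℝ)/54 * (3 * (g x)^2 * iteratedDeriv 1 g x))) x := by
    apply HasDerivAt.add
    apply HasDerivAt.sub
    apply HasDerivAt.sub
    apply HasDerivAt.add
    apply HasDerivAt.add
    apply HasDerivAt.add
    apply HasDerivAt.sub
    apply HasDerivAt.sub
    apply HasDerivAt.sub
    apply HasDerivAt.add
    apply HasDerivAt.add
    apply HasDerivAt.add
    · exact (Hf 4).const_mul _
    · exact Hg 4
    · exact ((hf0.const_mul 40).mul (Hf 2))
    · have := ((Hf 1).pow 2).const_mul (25:ℝ)
      simpa using this
    · exact ((hf0.const_mul ((35:ℝ)/3)).mul (Hg 2))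
    · exact ((hg0.const_mul ((35:ℝ)/3)).mul (Hf 2))
    · exact (((Hf 1).const_mul (15:ℝ)).mul (Hg 1))
    · exact ((hg0.const_mul ((55:ℝ)/18)).mul (Hg 2))
    · have := ((Hg 1).pow 2).const_mul ((35:ℝ)/18)
      simpa using this
    · have := (((hf0.pow 2).const_mul ((100:ℝ)/3)).mul hg0)
      norm_num at this ⊢; convert this using 2 <;> rfl
    · have := ((hf0.const_mul ((25:ℝ)/3)).mul (hg0.pow 2))
      norm_num at this ⊢; convert this using 2 <;> rfl
    · have := (hf0.pow 3).const_mul (40:ℝ)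
      simpa using this
    · have := (hg0.pow 3).const_mul ((35:ℝ)/54)
      simpa using this
  have hgoal : HasDerivAt (Fant f g) _ x := H
  convert hgoal using 1
  simp only [Q1u, Q1v, ← iteratedDeriv_one]
  ring

end KKSAux

set_option maxHeartbeats 2000000 in
/-- For any smooth solution `(u, v)` of the first commuting flow
`u_{t₁} = Q₁ᵘ, v_{t₁} = Q₁ᵛ` whose `x`-supports are contained in a fixed compact set
`K` for all times, the functional `ℋ₀ = ∫ (−3u + v/2) dx` is conserved. -/
theorem first_flow_conserved_H0 (u v : ℝ → ℝ → ℝ)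
    (hu : ContDiff ℝ (⊤ : ℕ∞) (Function.uncurry u)) (hv : ContDiff ℝ (⊤ : ℕ∞) (Function.uncurry v))
    (hut : ∀ x t : ℝ, deriv (fun s => u x s) t = Q1u (fun y => u y t) (fun y => v y t) x)
    (hvt : ∀ x t : ℝ, deriv (fun s => v x s) t = Q1v (fun y => u y t) (fun y => v y t) x)
    (K : Set ℝ) (hK : IsCompact K)
    (hsupp : ∀ t : ℝ, (Function.support fun x => u x t) ⊆ K ∧
                      (Function.support fun x => v x t) ⊆ K) :
    ∀ t₁ t₂ : ℝ,
      (∫ x : ℝ, (-3 * u x t₁ + v x t₁ / 2)) = ∫ x : ℝ, (-3 * u x t₂ + v x t₂ / 2) := by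
  open scoped ContDiff in
  intro t₁ t₂
  have hu' : ContDiff ℝ ∞ (Function.uncurry u) := hu.of_le (by simp)
  have hv' : ContDiff ℝ ∞ (Function.uncurry v) := hv.of_le (by simp)
  have hux : ∀ t, ContDiff ℝ ∞ (fun y => u y t) :=
    fun t => hu'.comp (contDiff_id.prodMk contDiff_const)
  have hvx : ∀ t, ContDiff ℝ ∞ (fun y => v y t) :=
    fun t => hv'.comp (contDiff_id.prodMk contDiff_const)
  have hone : (1 : WithTop ℕ∞) ≤ ∞ := by exact_mod_cast le_top
  have hut' : ∀ x, Differentiable ℝ (fun s => u x s) :=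
    fun x => (hu'.comp (contDiff_const.prodMk contDiff_id)).differentiable (by simp)
  have hvt' : ∀ x, Differentiable ℝ (fun s => v x s) :=
    fun x => (hv'.comp (contDiff_const.prodMk contDiff_id)).differentiable (by simp)
  set P : ℝ × ℝ → ℝ := fun p =>
    -3 * Q1u (fun y => u y p.2) (fun y => v y p.2) p.1
      + Q1v (fun y => u y p.2) (fun y => v y p.2) p.1 / 2 with hP
  have hPc : Continuous P := by
    have hU := fun k => (KKSAux.iter_contDiff hu' k).continuous
    have hV := fun k => (KKSAux.iter_contDiff hv' k).continuous
    have hU1 := (KKSAux.pderiv_contDiff hu').continuous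
    have hV1 := (KKSAux.pderiv_contDiff hv').continuous
    have h0u : Continuous fun p : ℝ × ℝ => u p.1 p.2 := by simpa using hU 0
    have h0v : Continuous fun p : ℝ × ℝ => v p.1 p.2 := by simpa using hV 0
    have hU2 := hU 2; have hU3 := hU 3; have hU5 := hU 5
    have hV2 := hV 2; have hV3 := hV 3; have hV5 := hV 5
    simp only [hP, Q1u, Q1v]
    fun_prop
  have hzero : ∀ t : ℝ, ∀ x ∉ K, (∀ k, iteratedDeriv k (fun y => u y t) x = 0) ∧
      (∀ k, iteratedDeriv k (fun y => v y t) x = 0) := by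
    intro t x hx
    constructor <;> intro k <;> by_contra h
    · exact hx (KKSAux.support_iter_subset hK.isClosed (hsupp t).1 k h)
    · exact hx (KKSAux.support_iter_subset hK.isClosed (hsupp t).2 k h)
  have hPzero : ∀ t : ℝ, ∀ x ∉ K, P (x, t) = 0 := by
    intro t x hx
    obtain ⟨hzu, hzv⟩ := hzero t x hx
    have e0u : u x t = 0 := by simpa using hzu 0
    have e0v : v x t = 0 := by simpa using hzv 0
    have e1u : deriv (fun y => u y t) x = 0 := by
      have := hzu 1; rwa [iteratedDeriv_one] at this
    have e1v : deriv (fun y => v y t) x = 0 := by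
      have := hzv 1; rwa [iteratedDeriv_one] at this
    simp [hP, Q1u, Q1v, hzu 5, hzu 3, hzu 2, hzv 5, hzv 3, hzv 2, e0u, e0v, e1u, e1v]
  have hFzero : ∀ t : ℝ, ∀ x ∉ K,
      KKSAux.Fant (fun y => u y t) (fun y => v y t) x = 0 := by
    intro t x hx
    obtain ⟨hzu, hzv⟩ := hzero t x hx
    have e0u : u x t = 0 := by simpa using hzu 0
    have e0v : v x t = 0 := by simpa using hzv 0
    simp [KKSAux.Fant, hzu 4, hzu 2, hzu 1, hzv 4, hzv 2, hzv 1, e0u, e0v]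
  have huz : ∀ (t : ℝ) x, x ∉ K → u x t = 0 := fun t x hx => by
    by_contra h; exact hx ((hsupp t).1 h)
  have hvz : ∀ (t : ℝ) x, x ∉ K → v x t = 0 := fun t x hx => by
    by_contra h; exact hx ((hsupp t).2 h)
  have hcont_slice : ∀ t : ℝ, Continuous fun x => -3 * u x t + v x t / 2 := by
    intro t
    have h1 := (hux t).continuous
    have h2 := (hvx t).continuous
    fun_prop
  have key : ∀ t₀ : ℝ,
      HasDerivAt (fun t => ∫ x : ℝ, (-3 * u x t + v x t / 2)) (∫ x : ℝ, P (x, t₀)) t₀ := by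
    intro t₀
    obtain ⟨C, hC⟩ := (hK.prod (isCompact_closedBall t₀ 1)).exists_bound_of_continuousOn
      hPc.continuousOn
    have main := hasDerivAt_integral_of_dominated_loc_of_deriv_le (μ := volume)
      (F := fun t x => -3 * u x t + v x t / 2) (F' := fun t x => P (x, t)) (x₀ := t₀)
      (bound := K.indicator fun _ => C) (s := Metric.ball t₀ 1) (Metric.ball_mem_nhds t₀ zero_lt_one)
      (Filter.Eventually.of_forall fun t => (hcont_slice t).aestronglyMeasurable)
      ((hcont_slice t₀).integrable_of_hasCompactSupport
        (HasCompactSupport.intro hK fun x hx => by simp [huz t₀ x hx, hvz t₀ x hx]))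
      ((hPc.comp (continuous_id.prodMk continuous_const)).aestronglyMeasurable)
      (Filter.Eventually.of_forall fun x t ht => ?_)
      (((MeasureTheory.integrableOn_const_iff (C := C) enorm_ne_top).2 (Or.inr hK.measure_lt_top)).integrable_indicator
        hK.measurableSet)
      (Filter.Eventually.of_forall fun x t ht => ?_)
    · exact main.2
    · by_cases hx : x ∈ K
      · rw [Set.indicator_of_mem hx]
        exact hC (x, t) (Set.mem_prod.2 ⟨hx, Metric.ball_subset_closedBall ht⟩)
      · simp [Set.indicator_of_notMem hx, hPzero t x hx]
    · have h1 : HasDerivAt (fun s => u x s) (Q1u (fun y => u y t) (fun y => v y t) x) t := by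
        have := ((hut' x) t).hasDerivAt
        rwa [hut x t] at this
      have h2 : HasDerivAt (fun s => v x s) (Q1v (fun y => u y t) (fun y => v y t) x) t := by
        have := ((hvt' x) t).hasDerivAt
        rwa [hvt x t] at this
      exact (h1.const_mul (-3:ℝ)).add (h2.div_const 2)
  have hder0 : ∀ t : ℝ, deriv (fun t => ∫ x : ℝ, (-3 * u x t + v x t / 2)) t = 0 := by
    intro t
    have hint0 : (∫ x : ℝ, P (x, t)) = 0 := by
      refine KKSAux.integral_eq_zero_of_hasDerivAt
        (f := KKSAux.Fant (fun y => u y t) (fun y => v y t))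
        (fun x => KKSAux.hasDerivAt_Fant (hux t) (hvx t) x)
        (hPc.comp (continuous_id.prodMk continuous_const)) hK (hFzero t) (hPzero t)
    rw [(key t).deriv, hint0]
  have hdiff : Differentiable ℝ (fun t => ∫ x : ℝ, (-3 * u x t + v x t / 2)) :=
    fun t => (key t).differentiableAt
  exact is_const_of_deriv_eq_zero hdiff hder0 t₁ t₂
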